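/- arXiv:2007.03636 — 5 statements merged into one kernel-verified Lean document; each statement's English description precedes it below -/
import Mathlib

section
/- For every integer r ≥ 1, the path P_{3r+1} on 3r+1 vertices is not an r-letter graph; that is, there is no alphabet Σ of size r, decoder D ⊆ Σ², and word w over Σ with Γ_D(w) isomorphic to P_{3r+1}. Consequently ℓ(P_{3r+1}) ≥ r+1. -/
/-- The letter graph `Γ_D(w)` of a word `w = w₁…wₙ` (positions indexed by `Fin n`) over an
alphabet `α` with decoder `D ⊆ α × α`: distinct positions `i < j` are adjacent
iff `(w i, w j) ∈ D`. -/
def letterGraph {α : Type*} {n : ℕ} (D : α → α → Prop) (w : Fin n → α) :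
    SimpleGraph (Fin n) where
  Adj i j := (i < j ∧ D (w i) (w j)) ∨ (j < i ∧ D (w j) (w i))
  symm := by
    constructor
    intro i j h
    rcases h with h | h
    · exact Or.inr h
    · exact Or.inl h
  loopless := by
    constructor
    intro i h
    rcases h with ⟨h, -⟩ | ⟨h, -⟩ <;> exact absurd h (lt_irrefl i)

/-- A graph `G` is a `k`-letter graph if it is isomorphic to the letter graph of some
word over an alphabet of size `k` (we take the alphabet to be `Fin k`). -/
def IsKLetterGraph (k : ℕ) {V : Type*} (G : SimpleGraph V) : Prop :=
  ∃ (n : ℕ) (D : Fin k → Fin k → Prop) (w : Fin n → Fin k),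
    Nonempty (G ≃g letterGraph D w)

/-- The lettericity of a graph: the least `k` such that `G` is a `k`-letter graph. -/
noncomputable def lettericity {V : Type*} (G : SimpleGraph V) : ℕ :=
  sInf {k | IsKLetterGraph k G}

/-- The graph `rK₂`: the disjoint union of `r` edges (a perfect matching on `2r`
vertices), the edges being `{2t, 2t+1}` for `0 ≤ t < r`. -/
def matchingGraph (r : ℕ) : SimpleGraph (Fin (2 * r)) where
  Adj i j := i ≠ j ∧ (i : ℕ) / 2 = (j : ℕ) / 2
  symm := by
    constructor
    intro i j h
    exact ⟨h.1.symm, h.2.symm⟩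
  loopless := by
    constructor
    intro i h
    exact h.1 rfl


/-! Suppose the letter graph of a word over `r` letters is the path `P_N`, `N = 3r + 1`. A vertex
adjacent to an occurrence of a letter is adjacent to all occurrences of that letter on the same side
of it in the word, and a letter occurring three times is not self-adjacent (no triangles). As
degrees are at most `2`, no letter occurs five times, and if a letter occurs four times, all
neighbours of its second and third occurrences lie between them, so (there being no `4`-cycle)
these two are the ends of the path. By pigeonhole exactly one letter `a` occurs four times and
every other letter three times, at path positions `q - 2, q, q + 2`. Numbering the path from the
second occurrence of `a`, the letters at positions `1, 4, 7, …` are forced one after the other: for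
every `j` some letter occupies positions `3j - 2, 3j, 3j + 2`, appearing in the word in the
opposite order and its occurrence at `3j + 2` before the second `a`, which is absurd once
`3j + 2 ≥ N`. -/

open SimpleGraph Finset

def pathGraphRev (n : ℕ) : pathGraph n ≃g pathGraph n :=
  ⟨Fin.revPerm, by intro u v; simp only [Fin.revPerm_apply, pathGraph_adj, Fin.val_rev]; omega⟩

namespace SimpleGraph.Iso

variable {V : Type*} {G : SimpleGraph V} {n : ℕ}

theorem adj_iff_of_pathGraph (φ : G ≃g pathGraph n) {x y : V} :
    G.Adj x y ↔ (φ x : ℕ) + 1 = φ y ∨ (φ y : ℕ) + 1 = φ x := by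
  rw [← φ.map_adj_iff, pathGraph_adj]

theorem eq_of_val_eq_of_pathGraph (φ : G ≃g pathGraph n) {x y : V} (h : (φ x : ℕ) = φ y) :
    x = y :=
  φ.injective (Fin.ext h)

theorem val_ne_of_pathGraph (φ : G ≃g pathGraph n) {x y : V} (h : x ≠ y) : (φ x : ℕ) ≠ φ y :=
  fun h' => h (φ.eq_of_val_eq_of_pathGraph h')

theorem exists_val_eq_of_pathGraph (φ : G ≃g pathGraph n) {m : ℕ} (hm : m < n) :
    ∃ x, (φ x : ℕ) = m :=
  ⟨φ.symm ⟨m, hm⟩, by simp⟩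

theorem exists_adj_of_pathGraph (φ : G ≃g pathGraph n) (hn : 2 ≤ n) (x : V) :
    ∃ y, G.Adj x y := by
  obtain ⟨y, hy⟩ := φ.exists_val_eq_of_pathGraph
    (m := if (φ x : ℕ) = 0 then 1 else φ x - 1) (by split_ifs <;> omega)
  exact ⟨y, φ.adj_iff_of_pathGraph.2 (by split_ifs at hy <;> omega)⟩

theorem not_three_adj_of_pathGraph (φ : G ≃g pathGraph n) {z a b c : V} (hab : a ≠ b)
    (hac : a ≠ c) (hbc : b ≠ c) : ¬ (G.Adj z a ∧ G.Adj z b ∧ G.Adj z c) := by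
  simp only [φ.adj_iff_of_pathGraph]
  have := φ.val_ne_of_pathGraph hab
  have := φ.val_ne_of_pathGraph hac
  have := φ.val_ne_of_pathGraph hbc
  omega

theorem not_square_of_pathGraph (φ : G ≃g pathGraph n) {x y a b : V} (hxy : x ≠ y)
    (hab : a ≠ b) : ¬ (G.Adj x a ∧ G.Adj x b ∧ G.Adj y a ∧ G.Adj y b) := by
  simp only [φ.adj_iff_of_pathGraph]
  have := φ.val_ne_of_pathGraph hxy
  have := φ.val_ne_of_pathGraph hab
  omega

theorem not_triangle_of_pathGraph (φ : G ≃g pathGraph n) {a b c : V} :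
    ¬ (G.Adj a b ∧ G.Adj b c ∧ G.Adj a c) := by
  simp only [φ.adj_iff_of_pathGraph]
  omega

end SimpleGraph.Iso

theorem exists_eq_four_and_forall_ne_eq_three {ι : Type*} [Fintype ι] (f : ι → ℕ)
    (hsum : ∑ i, f i = 3 * Fintype.card ι + 1) (hle : ∀ i, f i ≤ 4)
    (huniq : ∀ i j, f i = 4 → f j = 4 → i = j) : ∃ a, f a = 4 ∧ ∀ b, b ≠ a → f b = 3 := by
  classical
  obtain ⟨a, -, ha⟩ := exists_lt_of_sum_lt (s := univ) (f := fun _ => 3) (g := f)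
    (by simp [hsum, mul_comm])
  have ha4 : f a = 4 := le_antisymm (hle a) ha
  have hle3 : ∀ b ∈ univ.erase a, f b ≤ 3 := fun b hb => by
    have := hle b
    have : f b ≠ 4 := fun h => (mem_erase.1 hb).1 (huniq b a h ha4)
    omega
  have hrest : ∑ b ∈ univ.erase a, f b = ∑ _b ∈ univ.erase a, 3 := by
    have hsplit := sum_erase_add univ f (mem_univ a)
    rw [hsum, ha4] at hsplit
    rw [sum_const, card_erase_of_mem (mem_univ a), card_univ, smul_eq_mul]
    have : 1 ≤ Fintype.card ι := Fintype.card_pos_iff.2 ⟨a⟩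
    omega
  exact ⟨a, ha4, fun b hb => (sum_eq_sum_iff_of_le hle3).1 hrest b (mem_erase.2 ⟨hb, mem_univ b⟩)⟩

theorem exists_strictMono_fiber {α : Type*} [DecidableEq α] {N k : ℕ} {w : Fin N → α} {l : α}
    (h : #{x | w x = l} = k) :
    ∃ y : Fin k → Fin N, StrictMono y ∧ ∀ x, w x = l ↔ ∃ i, y i = x := by
  refine ⟨_, (orderEmbOfFin _ h).strictMono, fun x => ?_⟩
  rw [← Set.mem_range, range_orderEmbOfFin]
  simp

section LetterGraph

variable {α : Type*} {N : ℕ} {D : α → α → Prop} {w : Fin N → α}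

local notation:50 x:51 " ∼ " y:51 => SimpleGraph.Adj (letterGraph D w) x y

theorem letterGraph_adj_of_lt {i j : Fin N} (h : i < j) : i ∼ j ↔ D (w i) (w j) := by
  simp [letterGraph, h, h.not_gt]

theorem letterGraph_adj_congr {i j i' j' : Fin N} (hij : i < j) (hij' : i' < j')
    (hi : w i = w i') (hj : w j = w j') : i ∼ j ↔ i' ∼ j' := by
  rw [letterGraph_adj_of_lt hij, letterGraph_adj_of_lt hij', hi, hj]

theorem between_of_adj_of_not_adj {z q q' : Fin N} (h : z ∼ q) (h' : ¬ z ∼ q') (hw : w q = w q')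
    (hne : z ≠ q') : (q < z ∧ z < q') ∨ (q' < z ∧ z < q) := by
  rcases lt_trichotomy z q with hzq | rfl | hqz
  · rcases lt_trichotomy z q' with hzq' | rfl | hq'z
    · exact absurd ((letterGraph_adj_congr hzq hzq' rfl hw).1 h) h'
    · exact absurd rfl hne
    · exact Or.inr ⟨hq'z, hzq⟩
  · exact absurd rfl h.ne
  · rcases lt_trichotomy z q' with hzq' | rfl | hq'z
    · exact Or.inl ⟨hqz, hzq'⟩
    · exact absurd rfl hne
    · exact absurd ((letterGraph_adj_congr hqz hq'z hw rfl).1 h.symm).symm h'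

theorem not_decoder_self_of_pathGraph (φ : letterGraph D w ≃g pathGraph N) {p q s : Fin N}
    (hpq : p < q) (hqs : q < s) (hq : w q = w p) (hs : w s = w p) : ¬ D (w p) (w p) := by
  intro hD
  refine φ.not_triangle_of_pathGraph (a := p) (b := q) (c := s) ⟨?_, ?_, ?_⟩
  · rwa [letterGraph_adj_of_lt hpq, hq]
  · rwa [letterGraph_adj_of_lt hqs, hq, hs]
  · rwa [letterGraph_adj_of_lt (hpq.trans hqs), hs]

theorem lt_of_adj_of_lt_of_lt (φ : letterGraph D w ≃g pathGraph N) {z q q₁ q₂ : Fin N}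
    (h : z ∼ q) (hq₁ : q < q₁) (hq₂ : q₁ < q₂) (hw₁ : w q₁ = w q) (hw₂ : w q₂ = w q) :
    q < z := by
  rcases lt_trichotomy z q with hz | rfl | hz
  · refine absurd ⟨h, ?_, ?_⟩ (φ.not_three_adj_of_pathGraph hq₁.ne (hq₁.trans hq₂).ne hq₂.ne)
    · exact (letterGraph_adj_congr hz (hz.trans hq₁) rfl hw₁.symm).1 h
    · exact (letterGraph_adj_congr hz ((hz.trans hq₁).trans hq₂) rfl hw₂.symm).1 h
  · exact absurd rfl h.ne
  · exact hz

theorem lt_of_adj_of_gt_of_gt (φ : letterGraph D w ≃g pathGraph N) {z q q₁ q₂ : Fin N}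
    (h : q ∼ z) (hq₁ : q₁ < q) (hq₂ : q₂ < q₁) (hw₁ : w q₁ = w q) (hw₂ : w q₂ = w q) :
    z < q := by
  rcases lt_trichotomy q z with hz | rfl | hz
  · refine absurd ⟨h.symm, ?_, ?_⟩
      (φ.not_three_adj_of_pathGraph hq₁.ne' (hq₂.trans hq₁).ne' hq₂.ne')
    · exact ((letterGraph_adj_congr hz (hq₁.trans hz) hw₁.symm rfl).1 h).symm
    · exact ((letterGraph_adj_congr hz ((hq₂.trans hq₁).trans hz) hw₂.symm rfl).1 h).symm
  · exact absurd rfl h.ne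
  · exact hz

theorem endpoint_of_forall_adj_gt (φ : letterGraph D w ≃g pathGraph N) {p q : Fin N}
    (hpq : p < q) (hw : w p = w q) (h : ∀ z, q ∼ z → q < z) :
    (φ q : ℕ) = 0 ∨ (φ q : ℕ) + 1 = N := by
  by_contra! hq
  obtain ⟨z, hz⟩ := φ.exists_val_eq_of_pathGraph (m := φ q - 1) (by omega)
  obtain ⟨z', hz'⟩ := φ.exists_val_eq_of_pathGraph (m := φ q + 1) (by omega)
  have hqz : q ∼ z := φ.adj_iff_of_pathGraph.2 (by omega)
  have hqz' : q ∼ z' := φ.adj_iff_of_pathGraph.2 (by omega)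
  have hpz := (letterGraph_adj_congr (h z hqz) (hpq.trans (h z hqz)) hw.symm rfl).1 hqz
  have hpz' := (letterGraph_adj_congr (h z' hqz') (hpq.trans (h z' hqz')) hw.symm rfl).1 hqz'
  exact φ.not_square_of_pathGraph hpq.ne (by rintro rfl; omega) ⟨hpz, hpz', hqz, hqz'⟩

theorem endpoint_of_forall_adj_lt (φ : letterGraph D w ≃g pathGraph N) {p q : Fin N}
    (hqp : q < p) (hw : w p = w q) (h : ∀ z, q ∼ z → z < q) :
    (φ q : ℕ) = 0 ∨ (φ q : ℕ) + 1 = N := by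
  by_contra! hq
  obtain ⟨z, hz⟩ := φ.exists_val_eq_of_pathGraph (m := φ q - 1) (by omega)
  obtain ⟨z', hz'⟩ := φ.exists_val_eq_of_pathGraph (m := φ q + 1) (by omega)
  have hqz : z ∼ q := φ.adj_iff_of_pathGraph.2 (by omega)
  have hqz' : z' ∼ q := φ.adj_iff_of_pathGraph.2 (by omega)
  have hpz := (letterGraph_adj_congr (h z hqz.symm) ((h z hqz.symm).trans hqp) rfl hw.symm).1 hqz
  have hpz' :=
    (letterGraph_adj_congr (h z' hqz'.symm) ((h z' hqz'.symm).trans hqp) rfl hw.symm).1 hqz'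
  exact φ.not_square_of_pathGraph (by rintro rfl; omega) hqp.ne' ⟨hpz, hqz, hpz', hqz'⟩

theorem endpoints_of_four (φ : letterGraph D w ≃g pathGraph N) {x : Fin 4 → Fin N}
    (hx : StrictMono x) {l : α} (hw : ∀ i, w (x i) = l) :
    ((φ (x 1) : ℕ) = 0 ∨ (φ (x 1) : ℕ) + 1 = N) ∧ ((φ (x 2) : ℕ) = 0 ∨ (φ (x 2) : ℕ) + 1 = N) := by
  have hw' : ∀ i j, w (x i) = w (x j) := fun i j => (hw i).trans (hw j).symm
  refine ⟨endpoint_of_forall_adj_gt φ (hx (by decide : (0 : Fin 4) < 1)) (hw' 0 1) fun _ hz => ?_,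
    endpoint_of_forall_adj_lt φ (hx (by decide : (2 : Fin 4) < 3)) (hw' 3 2) fun _ hz => ?_⟩
  · exact lt_of_adj_of_lt_of_lt φ hz.symm (hx (by decide : (1 : Fin 4) < 2))
      (hx (by decide : (2 : Fin 4) < 3)) (hw' 2 1) (hw' 3 1)
  · exact lt_of_adj_of_gt_of_gt φ hz (hx (by decide : (1 : Fin 4) < 2))
      (hx (by decide : (0 : Fin 4) < 1)) (hw' 1 2) (hw' 0 2)

theorem card_fiber_le_four [DecidableEq α] (φ : letterGraph D w ≃g pathGraph N) (l : α) :
    #{x | w x = l} ≤ 4 := by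
  by_contra! h
  obtain ⟨y, hy, hyl⟩ := exists_strictMono_fiber (rfl : #{x | w x = l} = _)
  have hy5 : StrictMono (y ∘ Fin.castLE h) := hy.comp (Fin.strictMono_castLE h)
  have hw : ∀ i j, w ((y ∘ Fin.castLE h) i) = w ((y ∘ Fin.castLE h) j) := fun i j =>
    ((hyl _).2 ⟨_, rfl⟩).trans ((hyl _).2 ⟨_, rfl⟩).symm
  have hN : #{x | w x = l} ≤ N := (card_filter_le _ _).trans_eq (card_fin N)
  obtain ⟨z, hz⟩ := φ.exists_adj_of_pathGraph (by omega) ((y ∘ Fin.castLE h) 2)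
  exact (lt_of_adj_of_lt_of_lt φ hz.symm (hy5 (by decide : (2 : Fin 5) < 3))
    (hy5 (by decide : (3 : Fin 5) < 4)) (hw 3 2) (hw 4 2)).asymm
    (lt_of_adj_of_gt_of_gt φ hz (hy5 (by decide : (1 : Fin 5) < 2))
      (hy5 (by decide : (0 : Fin 5) < 1)) (hw 1 2) (hw 0 2))

theorem eq_of_card_fiber_eq_four [DecidableEq α] (φ : letterGraph D w ≃g pathGraph N) {a b : α}
    (ha : #{x | w x = a} = 4) (hb : #{x | w x = b} = 4) : a = b := by
  by_contra hab
  obtain ⟨x, hx, hxa⟩ := exists_strictMono_fiber ha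
  obtain ⟨y, hy, hyb⟩ := exists_strictMono_fiber hb
  have hwx : ∀ i, w (x i) = a := fun i => (hxa _).2 ⟨i, rfl⟩
  have hwy : ∀ i, w (y i) = b := fun i => (hyb _).2 ⟨i, rfl⟩
  have hxy : ∀ i j, x i ≠ y j := fun i j h => hab ((hwx i).symm.trans (h ▸ hwy j))
  have hex := endpoints_of_four φ hx hwx
  have hey := endpoints_of_four φ hy hwy
  have := φ.val_ne_of_pathGraph (hx.injective.ne (by decide : (1 : Fin 4) ≠ 2))
  have := φ.val_ne_of_pathGraph (hy.injective.ne (by decide : (1 : Fin 4) ≠ 2))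
  have := φ.val_ne_of_pathGraph (hxy 1 1)
  have := φ.val_ne_of_pathGraph (hxy 1 2)
  have := φ.val_ne_of_pathGraph (hxy 2 1)
  have := φ.val_ne_of_pathGraph (hxy 2 2)
  omega

theorem between_of_adj_middle (φ : letterGraph D w ≃g pathGraph N) {p q s z : Fin N}
    (hpq : p < q) (hqs : q < s) (hq : w q = w p) (hs : w s = w p) (hz : q ∼ z) :
    (p < z ∧ z < q ∧ z ∼ s) ∨ (q < z ∧ z < s ∧ p ∼ z) := by
  have hD := not_decoder_self_of_pathGraph φ hpq hqs hq hs
  have hthree := φ.not_three_adj_of_pathGraph (z := z) hpq.ne (hpq.trans hqs).ne hqs.ne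
  rcases lt_trichotomy z q with h | rfl | h
  · have hzs := (letterGraph_adj_congr h (h.trans hqs) rfl (hs.trans hq.symm).symm).1 hz.symm
    refine Or.inl ⟨?_, h, hzs⟩
    rcases lt_trichotomy z p with h' | rfl | h'
    · exact absurd ⟨(letterGraph_adj_congr h h' rfl hq).1 hz.symm, hz.symm, hzs⟩ hthree
    · rw [letterGraph_adj_of_lt (hpq.trans hqs), hs] at hzs
      exact absurd hzs hD
    · exact h'
  · exact absurd rfl hz.ne
  · have hpz := (letterGraph_adj_congr h (hpq.trans h) hq rfl).1 hz
    refine Or.inr ⟨h, ?_, hpz⟩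
    rcases lt_trichotomy z s with h' | rfl | h'
    · exact h'
    · rw [letterGraph_adj_of_lt (hpq.trans hqs), hs] at hpz
      exact absurd hpz hD
    · exact absurd ⟨hpz.symm, hz.symm,
        ((letterGraph_adj_congr h h' (hs.trans hq.symm).symm rfl).1 hz).symm⟩ hthree

theorem exists_positions_of_card_fiber_eq_three [DecidableEq α]
    (φ : letterGraph D w ≃g pathGraph N) {l : α} (hl : #{x | w x = l} = 3)
    (hend : ∀ x, w x = l → (φ x : ℕ) ≠ 0 ∧ (φ x : ℕ) + 1 ≠ N) :
    ∃ m₁ m₂ m₃ : Fin N, (φ m₁ : ℕ) + 2 = φ m₂ ∧ (φ m₂ : ℕ) + 2 = φ m₃ ∧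
      ∀ x, w x = l ↔ x = m₁ ∨ x = m₂ ∨ x = m₃ := by
  obtain ⟨n, hn, hnl⟩ := exists_strictMono_fiber hl
  have hw : ∀ i, w (n i) = l := fun i => (hnl _).2 ⟨i, rfl⟩
  have h₀₁ : n 0 < n 1 := hn (by decide)
  have h₁₂ : n 1 < n 2 := hn (by decide)
  have hcover : ∀ x, w x = l ↔ x = n 0 ∨ x = n 1 ∨ x = n 2 := by
    intro x
    rw [hnl]
    constructor
    · rintro ⟨i, rfl⟩
      fin_cases i <;> simp
    · rintro (rfl | rfl | rfl) <;> exact ⟨_, rfl⟩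
  obtain ⟨hn₀, hnN⟩ := hend _ (hw 1)
  obtain ⟨z, hz⟩ := φ.exists_val_eq_of_pathGraph (m := φ (n 1) - 1) (by omega)
  obtain ⟨z', hz'⟩ := φ.exists_val_eq_of_pathGraph (m := φ (n 1) + 1) (by omega)
  have hzz' : z ≠ z' := by rintro rfl; omega
  have := φ.val_ne_of_pathGraph h₀₁.ne'
  have := φ.val_ne_of_pathGraph h₁₂.ne
  have hmid := fun z => between_of_adj_middle (z := z) φ h₀₁ h₁₂ ((hw 1).trans (hw 0).symm)
    ((hw 2).trans (hw 0).symm)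
  -- two neighbours of `n 1` on the same side of it in the word would close a `4`-cycle
  rcases hmid z (φ.adj_iff_of_pathGraph.2 (by omega)) with ⟨-, -, hz₂⟩ | ⟨-, -, hz₀⟩ <;>
  rcases hmid z' (φ.adj_iff_of_pathGraph.2 (by omega)) with ⟨-, -, hz₂'⟩ | ⟨-, -, hz₀'⟩
  · exact absurd ⟨φ.adj_iff_of_pathGraph.2 (by omega), hz₂, φ.adj_iff_of_pathGraph.2 (by omega),
      hz₂'⟩ (φ.not_square_of_pathGraph hzz' h₁₂.ne)
  · rw [φ.adj_iff_of_pathGraph] at hz₂ hz₀'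
    exact ⟨n 2, n 1, n 0, by omega, by omega, fun x => by rw [hcover]; tauto⟩
  · rw [φ.adj_iff_of_pathGraph] at hz₀ hz₂'
    exact ⟨n 0, n 1, n 2, by omega, by omega, hcover⟩
  · exact absurd ⟨hz₀.symm, φ.adj_iff_of_pathGraph.2 (by omega), hz₀'.symm,
      φ.adj_iff_of_pathGraph.2 (by omega)⟩ (φ.not_square_of_pathGraph hzz' h₀₁.ne)

/-- The invariant of the induction. For `j = 0` there is no position `3j - 2`, and the last vertex
of the path plays the role of `y₃`. -/
structure DescendingTriple (φ : letterGraph D w ≃g pathGraph N) (x : Fin N) (j : ℕ)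
    (y₁ y₂ y₃ : Fin N) : Prop where
  letter₂ : w y₂ = w y₁
  letter₃ : w y₃ = w y₁
  lt₁₂ : y₁ < y₂
  lt₂₃ : y₂ < y₃
  lt_right : y₁ < x
  val₁ : (φ y₁ : ℕ) = 3 * j + 2
  val₂ : (φ y₂ : ℕ) = 3 * j
  val₃ : (φ y₃ : ℕ) + 2 = 3 * j ∨ (j = 0 ∧ (φ y₃ : ℕ) + 1 = N)

namespace DescendingTriple

variable {φ : letterGraph D w ≃g pathGraph N} {x : Fin N} {j : ℕ} {y₁ y₂ y₃ z : Fin N}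

theorem lt_of_val_eq (h : DescendingTriple φ x j y₁ y₂ y₃) (hz : (φ z : ℕ) = 3 * j + 1) :
    y₂ < z ∧ z < y₃ := by
  have := h.val₁; have := h.val₂; have := h.val₃
  have := φ.val_ne_of_pathGraph (h.lt₁₂.trans h.lt₂₃).ne
  refine (between_of_adj_of_not_adj (φ.adj_iff_of_pathGraph.2 (by omega) : z ∼ y₂)
    (by rw [φ.adj_iff_of_pathGraph]; omega) (h.letter₂.trans h.letter₃.symm)
    (by rintro rfl; omega)).resolve_right fun h' => (h'.1.trans h'.2).not_gt h.lt₂₃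

theorem letter_ne_of_val_eq (h : DescendingTriple φ x j y₁ y₂ y₃) (hx : (φ x : ℕ) = 0)
    (hz : (φ z : ℕ) = 3 * j + 1) : w z ≠ w x := by
  intro hzx
  have := h.val₁
  have hy₁z : y₁ ∼ z := φ.adj_iff_of_pathGraph.2 (by omega)
  have := (letterGraph_adj_congr (h.lt₁₂.trans (h.lt_of_val_eq hz).1) h.lt_right rfl hzx).1 hy₁z
  rw [φ.adj_iff_of_pathGraph] at this
  omega

theorem val_add_one_ne (h : DescendingTriple φ x j y₁ y₂ y₃) (hz : (φ z : ℕ) = 3 * j + 1)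
    {v : Fin N} (hv : w v = w z) : (φ v : ℕ) + 1 ≠ 3 * j := by
  intro hpv
  have := h.val₁; have := h.val₂; have := h.val₃
  have := φ.val_ne_of_pathGraph (h.lt₁₂.trans h.lt₂₃).ne
  obtain ⟨hy₂z, hzy₃⟩ := h.lt_of_val_eq hz
  have hvy₃ : v ∼ y₃ := φ.adj_iff_of_pathGraph.2 (by omega)
  obtain ⟨-, hvy₃'⟩ := (between_of_adj_of_not_adj hvy₃ (by rw [φ.adj_iff_of_pathGraph]; omega)
    h.letter₃ (by rintro rfl; omega)).resolve_left
    fun h' => (h'.1.trans h'.2).not_gt (h.lt₁₂.trans h.lt₂₃)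
  have := (letterGraph_adj_congr hvy₃' hzy₃ hv rfl).1 hvy₃
  rw [φ.adj_iff_of_pathGraph] at this
  omega

theorem succ [DecidableEq α] (h : DescendingTriple φ x j y₁ y₂ y₃) (hx : (φ x : ℕ) = 0)
    {x' : Fin N} (hx' : (φ x' : ℕ) + 1 = N) (hwx' : w x' = w x)
    (hall : ∀ b, b ≠ w x → #{v | w v = b} = 3) :
    ∃ y₁' y₂' y₃', DescendingTriple φ x (j + 1) y₁' y₂' y₃' := by
  have := h.val₁; have := h.val₂; have := h.val₃
  have := φ.val_ne_of_pathGraph (h.lt₁₂.trans h.lt₂₃).ne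
  obtain ⟨z, hz⟩ := φ.exists_val_eq_of_pathGraph (m := 3 * j + 1) (by omega)
  obtain ⟨hy₂z, hzy₃⟩ := h.lt_of_val_eq hz
  have hzx := h.letter_ne_of_val_eq hx hz
  have hend : ∀ v, w v = w z → (φ v : ℕ) ≠ 0 ∧ (φ v : ℕ) + 1 ≠ N := fun v hv =>
    ⟨fun h₀ => hzx (hv ▸ φ.eq_of_val_eq_of_pathGraph (h₀.trans hx.symm) ▸ rfl),
      fun hN => hzx (hv ▸ φ.eq_of_val_eq_of_pathGraph (by omega : (φ x' : ℕ) = φ v) ▸ hwx')⟩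
  obtain ⟨m₁, m₂, m₃, hm₁₂, hm₂₃, hcover⟩ :=
    exists_positions_of_card_fiber_eq_three φ (hall _ hzx) hend
  have hwm₁ : w m₁ = w z := (hcover _).2 (Or.inl rfl)
  have hwm₂ : w m₂ = w z := (hcover _).2 (Or.inr (Or.inl rfl))
  have hwm₃ : w m₃ = w z := (hcover _).2 (Or.inr (Or.inr rfl))
  have := h.val_add_one_ne hz hwm₁
  have := h.val_add_one_ne hz hwm₂
  -- the letter of `z` is missing at `3j - 1`, so it occupies `3j + 1, 3j + 3, 3j + 5`
  have hpm₁ : (φ m₁ : ℕ) = 3 * j + 1 := by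
    rcases (hcover z).1 rfl with rfl | rfl | rfl <;> omega
  obtain ⟨hy₁m₂, -⟩ : y₁ < m₂ ∧ m₂ < y₃ :=
    (between_of_adj_of_not_adj (φ.adj_iff_of_pathGraph.2 (by omega) : m₂ ∼ y₁)
      (by rw [φ.adj_iff_of_pathGraph]; omega) h.letter₃.symm (by rintro rfl; omega)).resolve_right
      fun h' => (h'.1.trans h'.2).not_gt (h.lt₁₂.trans h.lt₂₃)
  obtain ⟨hm₂y₂, -⟩ : m₂ < y₂ ∧ y₂ < z :=
    (between_of_adj_of_not_adj (φ.adj_iff_of_pathGraph.2 (by omega) : y₂ ∼ z)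
      (by rw [φ.adj_iff_of_pathGraph]; omega) hwm₂.symm (by rintro rfl; omega)).resolve_left
      fun h' => h'.1.not_gt hy₂z
  obtain ⟨hm₃y₁, -⟩ : m₃ < y₁ ∧ y₁ < z :=
    (between_of_adj_of_not_adj (φ.adj_iff_of_pathGraph.2 (by omega) : y₁ ∼ z)
      (by rw [φ.adj_iff_of_pathGraph]; omega) hwm₃.symm (by rintro rfl; omega)).resolve_left
      fun h' => h'.1.not_gt (h.lt₁₂.trans hy₂z)
  exact ⟨m₃, m₂, z, hwm₂.trans hwm₃.symm, hwm₃.symm, hm₃y₁.trans hy₁m₂, hm₂y₂.trans hy₂z,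
    hm₃y₁.trans h.lt_right, by omega, by omega, Or.inl (by omega)⟩

end DescendingTriple

theorem false_of_four_of_val_eq_zero [DecidableEq α] (φ : letterGraph D w ≃g pathGraph N)
    {x : Fin 4 → Fin N} (hx : StrictMono x) {a : α} (hw : ∀ i, w (x i) = a)
    (hall : ∀ b, b ≠ a → #{v | w v = b} = 3) (h₀ : (φ (x 1) : ℕ) = 0) : False := by
  have hw' : ∀ i j, w (x i) = w (x j) := fun i j => (hw i).trans (hw j).symm
  have h₀₁ : x 0 < x 1 := hx (by decide)
  have h₁₂ : x 1 < x 2 := hx (by decide)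
  have h₂₃ : x 2 < x 3 := hx (by decide)
  have := φ.val_ne_of_pathGraph h₀₁.ne
  have := φ.val_ne_of_pathGraph h₁₂.ne
  have h₂ : (φ (x 2) : ℕ) + 1 = N := (endpoints_of_four φ hx hw).2.resolve_left (by omega)
  obtain ⟨u, hu⟩ := φ.exists_val_eq_of_pathGraph (m := 1) (by omega)
  have hu₁ : x 1 ∼ u := φ.adj_iff_of_pathGraph.2 (by omega)
  have h₁u := lt_of_adj_of_lt_of_lt φ hu₁.symm h₁₂ h₂₃ (hw' 2 1) (hw' 3 1)
  have hu₀ := (letterGraph_adj_congr h₁u (h₀₁.trans h₁u) (hw' 1 0) rfl).1 hu₁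
  rw [φ.adj_iff_of_pathGraph] at hu₀
  have htriple : ∀ j, ∃ y₁ y₂ y₃, DescendingTriple φ (x 1) j y₁ y₂ y₃ := by
    intro j
    induction j with
    | zero => exact ⟨_, _, _, hw' 1 0, hw' 2 0, h₀₁, h₁₂, h₀₁, by omega, h₀, Or.inr ⟨rfl, h₂⟩⟩
    | succ j ih =>
      obtain ⟨_, _, _, h⟩ := ih
      exact h.succ h₀ h₂ (hw' 2 1) (hw 1 ▸ hall)
  obtain ⟨_, _, _, h⟩ := htriple N
  have := h.val₁
  omega

theorem false_of_four [DecidableEq α] (φ : letterGraph D w ≃g pathGraph N)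
    {x : Fin 4 → Fin N} (hx : StrictMono x) {a : α} (hw : ∀ i, w (x i) = a)
    (hall : ∀ b, b ≠ a → #{v | w v = b} = 3) : False := by
  rcases (endpoints_of_four φ hx hw).1 with h | h
  · exact false_of_four_of_val_eq_zero φ hx hw hall h
  · refine false_of_four_of_val_eq_zero (φ.trans (pathGraphRev N)) hx hw hall ?_
    simp only [pathGraphRev, RelIso.trans_apply, RelIso.coe_fn_mk, Fin.revPerm_apply,
      Fin.val_rev]
    omega

end LetterGraph

theorem letterGraph_congr {α β : Type*} {n : ℕ} {D : α → α → Prop} {D' : β → β → Prop}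
    {w : Fin n → α} {w' : Fin n → β} (h : ∀ i j, D' (w' i) (w' j) ↔ D (w i) (w j)) :
    letterGraph D' w' = letterGraph D w := by
  ext i j
  simp only [letterGraph, h]

theorem letterGraph_adj_id {n : ℕ} (G : SimpleGraph (Fin n)) : letterGraph G.Adj id = G := by
  ext i j
  rcases lt_trichotomy i j with h | rfl | h
  · simp [letterGraph_adj_of_lt h]
  · simp
  · simp [(letterGraph _ _).adj_comm i, letterGraph_adj_of_lt h, G.adj_comm]

theorem isKLetterGraph_card {n : ℕ} (G : SimpleGraph (Fin n)) : IsKLetterGraph n G :=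
  ⟨n, G.Adj, id, by rw [letterGraph_adj_id]; exact ⟨Iso.refl⟩⟩

theorem IsKLetterGraph.mono {k m : ℕ} {V : Type*} {G : SimpleGraph V} (h : IsKLetterGraph k G)
    (hkm : k ≤ m) : IsKLetterGraph m G := by
  obtain ⟨n, D, w, ⟨φ⟩⟩ := h
  have hinj := Fin.castLE_injective hkm
  refine ⟨n, Relation.Map D (Fin.castLE hkm) (Fin.castLE hkm), fun x => Fin.castLE hkm (w x), ?_⟩
  rw [letterGraph_congr fun i j => Relation.map_apply_apply hinj hinj D _ _]
  exact ⟨φ⟩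

theorem not_isKLetterGraph_pathGraph (r : ℕ) : ¬ IsKLetterGraph r (pathGraph (3 * r + 1)) := by
  rintro ⟨n, D, w, ⟨φ⟩⟩
  obtain rfl : n = 3 * r + 1 := by simpa using φ.card_eq.symm
  have hsum : ∑ b, #{x | w x = b} = 3 * Fintype.card (Fin r) + 1 := by
    rw [← card_eq_sum_card_fiberwise fun x _ => mem_univ (w x)]
    simp
  obtain ⟨a, ha, hall⟩ := exists_eq_four_and_forall_ne_eq_three _ hsum
    (card_fiber_le_four φ.symm) fun _ _ => eq_of_card_fiber_eq_four φ.symm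
  obtain ⟨x, hx, hxa⟩ := exists_strictMono_fiber ha
  exact false_of_four φ.symm hx (fun i => (hxa _).2 ⟨i, rfl⟩) hall

theorem pathGraph_not_r_letter_general (r : ℕ) :
    ¬ IsKLetterGraph r (SimpleGraph.pathGraph (3 * r + 1)) ∧
      r + 1 ≤ lettericity (SimpleGraph.pathGraph (3 * r + 1)) :=
  ⟨not_isKLetterGraph_pathGraph r, le_csInf ⟨_, isKLetterGraph_card _⟩ fun _ hk =>
    not_le.1 fun hkr => not_isKLetterGraph_pathGraph r (hk.mono hkr)⟩

/-- For every `r ≥ 1`, the path `P_{3r+1}` is not an `r`-letter graph; consequently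
`ℓ(P_{3r+1}) ≥ r + 1`. -/
theorem pathGraph_not_r_letter (r : ℕ) (hr : 1 ≤ r) :
    ¬ IsKLetterGraph r (SimpleGraph.pathGraph (3 * r + 1)) ∧
      r + 1 ≤ lettericity (SimpleGraph.pathGraph (3 * r + 1)) :=
  pathGraph_not_r_letter_general r
end

section
/- Let r ≥ 1 and suppose Γ_D(w) is a letter graph over some alphabet Σ with decoder D such that Γ_D(w) is isomorphic to rK₂, the disjoint union of r edges. Then no letter a ∈ Σ occurs at three or more positions of w; that is, every letter encodes at most 2 vertices. -/
/-
A letter repeated at positions `i < j < k` makes `i` or `k` adjacent to every neighbour `q` of `j`: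
the decoder only sees the letters and the order, and `q` lies before `k` or after `i`.
In `rK₂` the unique neighbour `q` of `j` would then have two distinct neighbours.
-/

lemma Set.exists_lt_lt_of_two_lt_ncard {α : Type*} [LinearOrder α] {s : Set α} (hs : s.Finite)
    (h : 2 < s.ncard) : ∃ x ∈ s, ∃ y ∈ s, ∃ z ∈ s, x < y ∧ y < z := by
  rw [Set.ncard_eq_toFinset_card s hs] at h
  let f := hs.toFinset.orderEmbOfFin rfl
  have hf : ∀ i, f i ∈ s := fun i => hs.mem_toFinset.mp (hs.toFinset.orderEmbOfFin_mem rfl i)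
  exact ⟨f ⟨0, by omega⟩, hf _, f ⟨1, by omega⟩, hf _, f ⟨2, by omega⟩, hf _,
    f.strictMono (by simp [Fin.lt_def]), f.strictMono (by simp [Fin.lt_def])⟩

lemma SimpleGraph.Iso.existsUnique_adj {V W : Type*} {G : SimpleGraph V} {H : SimpleGraph W}
    (e : G ≃g H) (hG : ∀ v, ∃! u, G.Adj v u) (v : W) : ∃! u, H.Adj v u :=
  (e.toEquiv.existsUnique_congr fun u => by simp [← e.map_adj_iff]).mp (hG (e.symm v))

lemma matchingGraph_existsUnique_adj (r : ℕ) (i : Fin (2 * r)) :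
    ∃! j, (matchingGraph r).Adj i j := by
  -- the partner of `i` is `i xor 1`
  refine ⟨⟨2 * (i / 2) + (1 - i % 2), by omega⟩, ⟨fun hij => ?_, ?_⟩, ?_⟩
  · have := congrArg Fin.val hij
    simp only at this
    omega
  · simp only
    omega
  · rintro j ⟨hij, hdiv⟩
    have : (i : ℕ) ≠ j := Fin.val_ne_of_ne hij
    ext
    simp only
    omega

section letterGraph

variable {α : Type*} {n : ℕ} {D : α → α → Prop} {w : Fin n → α}

lemma letterGraph_adj_or_adj_of_adj_middle {i j k q : Fin n} (hij : i < j) (hjk : j < k)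
    (hi : w i = w j) (hk : w k = w j) (hq : (letterGraph D w).Adj q j) :
    (letterGraph D w).Adj q i ∨ (letterGraph D w).Adj q k := by
  rcases hq with ⟨hqj, hD⟩ | ⟨hjq, hD⟩
  · exact Or.inr (Or.inl ⟨hqj.trans hjk, hk ▸ hD⟩)
  · exact Or.inl (Or.inr ⟨hij.trans hjq, hi ▸ hD⟩)

lemma letterGraph_not_lt_lt_of_existsUnique_adj (hG : ∀ v, ∃! u, (letterGraph D w).Adj v u)
    {i j k : Fin n} (hij : i < j) (hjk : j < k) (hi : w i = w j) (hk : w k = w j) : False := by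
  obtain ⟨q, hq, -⟩ := hG j
  obtain ⟨u, -, hu⟩ := hG q
  have hju := hu j hq.symm
  rcases letterGraph_adj_or_adj_of_adj_middle hij hjk hi hk hq.symm with hqi | hqk
  · exact hij.ne (hu i hqi ▸ hju.symm)
  · exact hjk.ne' (hu k hqk ▸ hju.symm)

end letterGraph

theorem matching_letter_encodes_at_most_two_general {α : Type*} {r n : ℕ}
    (D : α → α → Prop) (w : Fin n → α)
    (h : Nonempty (matchingGraph r ≃g letterGraph D w)) (a : α) :
    {i : Fin n | w i = a}.ncard ≤ 2 := by
  obtain ⟨e⟩ := h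
  by_contra! hcard
  obtain ⟨i, hi, j, hj, k, hk, hij, hjk⟩ :=
    Set.exists_lt_lt_of_two_lt_ncard (Set.toFinite _) hcard
  exact letterGraph_not_lt_lt_of_existsUnique_adj
    (e.existsUnique_adj (matchingGraph_existsUnique_adj r)) hij hjk
    (hi.trans hj.symm) (hk.trans hj.symm)

/-- In any lettering of `rK₂`, no letter occurs at three or more positions of the word:
every letter encodes at most `2` vertices. -/
theorem matching_letter_encodes_at_most_two {α : Type*} {r n : ℕ} (hr : 1 ≤ r)
    (D : α → α → Prop) (w : Fin n → α)
    (h : Nonempty (matchingGraph r ≃g letterGraph D w)) (a : α) :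
    {i : Fin n | w i = a}.ncard ≤ 2 :=
  matching_letter_encodes_at_most_two_general D w h a
end

section
/- For every integer r ≥ 1, the lettericity of rK₂, the disjoint union of r edges, is exactly r: rK₂ is an r-letter graph, and it is not a k-letter graph for any k < r. -/
/-!
The word `0 0 1 1 … (r-1) (r-1)` with the equality decoder spells out `rK₂` exactly. Conversely,
write the `r` edges of a letter graph isomorphic to `rK₂` as positions `p_t < q_t`. If two of
them had the same first letter, say at `p_t ≤ p_s`, then `p_t < q_s` and the decoder pair of
edge `s` would make `p_t` adjacent to `q_s`, an edge between distinct components. So the `r`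
first letters are distinct.
-/

section LetterGraph

variable {α : Type*} {n : ℕ} {D : α → α → Prop} {w : Fin n → α}

theorem letterGraph_adj_iff_of_lt {i j : Fin n} (h : i < j) :
    (letterGraph D w).Adj i j ↔ D (w i) (w j) := by
  simp [letterGraph, h, h.not_gt]

theorem letterGraph_eq_adj_iff {i j : Fin n} :
    (letterGraph (· = ·) w).Adj i j ↔ i ≠ j ∧ w i = w j := by
  rcases lt_trichotomy i j with h | rfl | h
  · simp [letterGraph_adj_iff_of_lt h, h.ne]
  · simp
  · rw [SimpleGraph.adj_comm, letterGraph_adj_iff_of_lt h]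
    simp [h.ne', eq_comm]

theorem letterGraph_min_lt_max_of_adj {x y : Fin n} (h : (letterGraph D w).Adj x y) :
    min x y < max x y ∧ D (w (min x y)) (w (max x y)) := by
  rcases le_total x y with hxy | hxy
  · have hlt := lt_of_le_of_ne hxy h.ne
    simp only [min_eq_left hxy, max_eq_right hxy]
    exact ⟨hlt, (letterGraph_adj_iff_of_lt hlt).1 h⟩
  · have hlt := lt_of_le_of_ne hxy h.ne'
    simp only [min_eq_right hxy, max_eq_left hxy]
    exact ⟨hlt, (letterGraph_adj_iff_of_lt hlt).1 h.symm⟩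

end LetterGraph

theorem card_le_of_letterGraph {n k : ℕ} {D : Fin k → Fin k → Prop} {w : Fin n → Fin k}
    {ι : Type*} [Fintype ι] (c : Fin n → ι)
    (hc : ∀ x y, (letterGraph D w).Adj x y → c x = c y)
    (hedge : ∀ t, ∃ x y, (letterGraph D w).Adj x y ∧ c x = t ∧ c y = t) :
    Fintype.card ι ≤ k := by
  choose x y hadj hx hy using hedge
  let p := fun t => min (x t) (y t)
  let q := fun t => max (x t) (y t)
  have hp : ∀ t, c (p t) = t := fun t => by
    rcases min_choice (x t) (y t) with h | h <;> simp only [p, h, hx, hy]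
  have hq : ∀ t, c (q t) = t := fun t => by
    rcases max_choice (x t) (y t) with h | h <;> simp only [q, h, hx, hy]
  have hpq : ∀ t, p t < q t ∧ D (w (p t)) (w (q t)) :=
    fun t => letterGraph_min_lt_max_of_adj (hadj t)
  have first_letter : ∀ t s, p t ≤ p s → w (p t) = w (p s) → t = s := by
    intro t s hle hw
    have hlt : p t < q s := hle.trans_lt (hpq s).1
    have hcross : (letterGraph D w).Adj (p t) (q s) :=
      (letterGraph_adj_iff_of_lt hlt).2 (hw ▸ (hpq s).2)
    rw [← hp t, ← hq s]
    exact hc _ _ hcross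
  have hinj : Function.Injective (w ∘ p) := fun t s hw => by
    rcases le_total (p t) (p s) with h | h
    · exact first_letter t s h hw
    · exact (first_letter s t h hw.symm).symm
  simpa using Fintype.card_le_of_injective _ hinj

theorem matchingGraph_eq_letterGraph (r : ℕ) :
    matchingGraph r =
      letterGraph (· = ·) fun i : Fin (2 * r) => (⟨i / 2, by omega⟩ : Fin r) := by
  ext i j
  simp [letterGraph_eq_adj_iff, matchingGraph]

theorem isKLetterGraph_matchingGraph (r : ℕ) : IsKLetterGraph r (matchingGraph r) := by
  rw [matchingGraph_eq_letterGraph]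
  exact ⟨_, _, _, ⟨.refl⟩⟩

theorem le_of_isKLetterGraph_matchingGraph {r k : ℕ} (h : IsKLetterGraph k (matchingGraph r)) :
    r ≤ k := by
  obtain ⟨n, D, w, ⟨φ⟩⟩ := h
  let c : Fin n → Fin r := fun x => ⟨(φ.symm x : ℕ) / 2, by omega⟩
  have hc : ∀ x y, (letterGraph D w).Adj x y → c x = c y := fun x y hxy =>
    Fin.ext (φ.symm.map_adj_iff.2 hxy).2
  have hedge : ∀ t, ∃ x y, (letterGraph D w).Adj x y ∧ c x = t ∧ c y = t := fun t =>
    ⟨φ ⟨2 * t, by omega⟩, φ ⟨2 * t + 1, by omega⟩,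
      φ.map_adj_iff.2 ⟨by simp [Fin.ext_iff], by simp; omega⟩,
      Fin.ext (by simp [c]), Fin.ext (by simp [c]; omega)⟩
  simpa using card_le_of_letterGraph c hc hedge

theorem lettericity_matchingGraph_general (r : ℕ) :
    lettericity (matchingGraph r) = r ∧
      IsKLetterGraph r (matchingGraph r) ∧
      ∀ k < r, ¬ IsKLetterGraph k (matchingGraph r) := by
  have lower : ∀ k, IsKLetterGraph k (matchingGraph r) → r ≤ k :=
    fun _ => le_of_isKLetterGraph_matchingGraph
  refine ⟨IsLeast.csInf_eq ⟨isKLetterGraph_matchingGraph r, lower⟩,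
    isKLetterGraph_matchingGraph r, fun k hk h => (lower k h).not_gt hk⟩

/-- For every `r ≥ 1`, the lettericity of `rK₂` is exactly `r`: it is an `r`-letter
graph, and not a `k`-letter graph for any `k < r`. -/
theorem lettericity_matchingGraph (r : ℕ) (hr : 1 ≤ r) :
    lettericity (matchingGraph r) = r ∧
      IsKLetterGraph r (matchingGraph r) ∧
      ∀ k < r, ¬ IsKLetterGraph k (matchingGraph r) :=
  lettericity_matchingGraph_general r
end

section
/- Let Γ_D(w) be a letter graph over alphabet Σ with decoder D such that Γ_D(w) is isomorphic to rK₂, and let a ∈ Σ with (a,a) ∉ D be a letter encoding an anticlique whose first occurrence in w is earliest among all letters encoding anticliques. If a occurs exactly twice in w, at positions i < k, then the vertex adjacent to i in Γ_D(w) cannot be encoded by a letter b ≠ a that also encodes an anticlique with both of its positions after i. (Key step in the proof that every r-lettering of rK₂ assigns each letter to the two vertices of an edge.) -/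
namespace letterGraph

variable {α : Type*} {n : ℕ} {D : α → α → Prop} {w : Fin n → α}

theorem adj_of_lt {i j : Fin n} (hij : i < j) (h : D (w i) (w j)) :
    (letterGraph D w).Adj i j :=
  Or.inl ⟨hij, h⟩

theorem rel_of_adj_of_lt {i j : Fin n} (hadj : (letterGraph D w).Adj i j) (hij : i < j) :
    D (w i) (w j) := by
  rcases hadj with ⟨-, h⟩ | ⟨hji, -⟩
  · exact h
  · exact absurd hij hji.not_gt

theorem adj_of_adj_of_letter_eq {i x x' : Fin n} (hadj : (letterGraph D w).Adj i x)
    (hix : i < x) (hix' : i < x') (hw : w x' = w x) : (letterGraph D w).Adj i x' :=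
  adj_of_lt hix' (hw ▸ rel_of_adj_of_lt hadj hix)

end letterGraph

theorem matchingGraph.eq_of_adj_of_adj {r : ℕ} {v x y : Fin (2 * r)}
    (hx : (matchingGraph r).Adj v x) (hy : (matchingGraph r).Adj v y) : x = y := by
  obtain ⟨hvx, hdx⟩ := hx
  obtain ⟨hvy, hdy⟩ := hy
  have := Fin.val_ne_of_ne hvx
  have := Fin.val_ne_of_ne hvy
  ext
  omega

theorem matching_key_step_general {α : Type*} {r n : ℕ}
    (D : α → α → Prop) (w : Fin n → α)
    (hiso : Nonempty (matchingGraph r ≃g letterGraph D w))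
    (a : α) (i : Fin n) :
    ∀ x : Fin n, (letterGraph D w).Adj i x →
      ¬ (w x ≠ a ∧ ¬ D (w x) (w x) ∧ (∃ x' : Fin n, x' ≠ x ∧ w x' = w x) ∧
          ∀ j : Fin n, w j = w x → i < j) := by
  rintro x hadj ⟨-, -, ⟨x', hx'x, hwx'⟩, hafter⟩
  obtain ⟨e⟩ := hiso
  have hadj' : (letterGraph D w).Adj i x' :=
    letterGraph.adj_of_adj_of_letter_eq hadj (hafter x rfl) (hafter x' hwx') hwx'
  have hpre : e.symm x' = e.symm x :=
    matchingGraph.eq_of_adj_of_adj (e.symm.map_rel_iff.2 hadj') (e.symm.map_rel_iff.2 hadj)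
  exact hx'x (e.symm.injective hpre)

/-- Key step in the proof that every `r`-lettering of `rK₂` assigns each letter to the
two vertices of an edge.  Suppose `Γ_D(w) ≅ rK₂` and `a` is a letter with `(a,a) ∉ D`
(so `a` encodes an anticlique) occurring exactly twice, at positions `i < k`, whose first
occurrence is earliest among all letters encoding anticliques (no letter `b` with
`(b,b) ∉ D` occurs before position `i`).  Then no vertex `x` adjacent to `i` can be
encoded by a letter `b ≠ a` with `(b,b) ∉ D` that has (at least) two positions, all of
them after `i`. -/
theorem matching_key_step {α : Type*} {r n : ℕ} (hr : 1 ≤ r)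
    (D : α → α → Prop) (w : Fin n → α)
    (hiso : Nonempty (matchingGraph r ≃g letterGraph D w))
    (a : α) (haa : ¬ D a a) (i k : Fin n) (hik : i < k)
    (hocc : {j : Fin n | w j = a} = {i, k})
    (hearliest : ∀ b : α, ¬ D b b → ∀ j : Fin n, j < i → w j ≠ b) :
    ∀ x : Fin n, (letterGraph D w).Adj i x →
      ¬ (w x ≠ a ∧ ¬ D (w x) (w x) ∧ (∃ x' : Fin n, x' ≠ x ∧ w x' = w x) ∧
          ∀ j : Fin n, w j = w x → i < j) :=
  matching_key_step_general D w hiso a i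
end

section
/- For every integer r ≥ 1, deleting the first occurrence of the letter 1 from the word w = 2 1 3 2 1 4 3 2 5 4 3 … (r+1) r (r−1) (r+1) r (whose letter graph with decoder D = {(2,1),(3,2),…,(r+1,r)} is P_{3r+1}) yields a word whose letter graph with the same decoder D is isomorphic to the path P_{3r}; additionally deleting the last occurrence of the letter r+1 yields a word whose letter graph with decoder D is isomorphic to P_{3r−1}. -/
/-- The decoder `D = {(2,1), (3,2), …, (r+1, r)}` (letters named `1, …, r+1` as
natural numbers). -/
def pathDecoder (r : ℕ) (a b : ℕ) : Prop := a = b + 1 ∧ 1 ≤ b ∧ b ≤ r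

/-- The word `2 1 3 2 1 4 3 2 5 4 3 … (r+1) r (r−1) (r+1) r` of length `3r+1`:
it begins with `2 1`, then has the blocks `(t+2) (t+1) t` for `t = 1, …, r−1`, and ends
with `(r+1) r`.  (Position `p` with `2 ≤ p ≤ 3r−2` lies in block `t = (p+1)/3` and
carries the letter `4t + 1 − p`.) -/
def pathWord (r : ℕ) (p : Fin (3 * r + 1)) : ℕ :=
  if (p : ℕ) = 0 then 2
  else if (p : ℕ) = 1 then 1
  else if (p : ℕ) + 2 ≤ 3 * r then 4 * (((p : ℕ) + 1) / 3) + 1 - (p : ℕ)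
  else if (p : ℕ) + 1 = 3 * r then r + 1
  else r

/-- Position map realizing the deletion of the first occurrence of the letter `1`
(which sits at position `1`) from a word of length `3r+1`. -/
def delIdx1 (r : ℕ) (p : Fin (3 * r)) : Fin (3 * r + 1) :=
  if (p : ℕ) = 0 then ⟨0, by omega⟩
  else ⟨(p : ℕ) + 1, by have := p.isLt; omega⟩

/-- Position map realizing the additional deletion of the last occurrence of the letter
`r+1` (which sits at position `3r−1` of the original word) from the word of length `3r`
obtained by `delIdx1`. -/
def delIdx2 (r : ℕ) (p : Fin (3 * r - 1)) : Fin (3 * r + 1) :=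
  if (p : ℕ) = 0 then ⟨0, by omega⟩
  else if (p : ℕ) = 3 * r - 2 then ⟨3 * r, by omega⟩
  else ⟨(p : ℕ) + 1, by have := p.isLt; omega⟩


open Set

theorem SimpleGraph.nonempty_iso_pathGraph_of_injective {n : ℕ} {G : SimpleGraph (Fin n)}
    (σ : Fin n → Fin n) (hσ : Function.Injective σ)
    (hadj : ∀ i j, G.Adj (σ i) (σ j) ↔ (i : ℕ) + 1 = j ∨ (j : ℕ) + 1 = i) :
    Nonempty (G ≃g pathGraph n) :=
  ⟨(⟨Equiv.ofBijective σ hσ.bijective_of_finite, fun {i j} =>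
    (hadj i j).trans pathGraph_adj.symm⟩ : pathGraph n ≃g G).symm⟩

theorem letterGraph_nonempty_iso_pathGraph {α : Type*} {n : ℕ} (D : α → α → Prop)
    (w : Fin n → α) (word : ℕ → α) (hw : ∀ p, w p = word p) (f : ℕ → ℕ)
    (hf_maps : MapsTo f (Iio n) (Iio n)) (hf_inj : InjOn f (Iio n))
    (hadj : ∀ i < n, ∀ j < n,
      (f i < f j ∧ D (word (f i)) (word (f j))) ∨ (f j < f i ∧ D (word (f j)) (word (f i))) ↔
        i + 1 = j ∨ j + 1 = i) :
    Nonempty (letterGraph D w ≃g SimpleGraph.pathGraph n) := by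
  refine SimpleGraph.nonempty_iso_pathGraph_of_injective (fun k => ⟨f k, hf_maps k.2⟩)
    (fun i j h => Fin.ext (hf_inj i.2 j.2 (Fin.mk.inj_iff.mp h))) fun i j => ?_
  simp only [letterGraph, hw]
  exact hadj i i.2 j j.2

namespace PathWord

def deletedWord₁ (r k : ℕ) : ℕ :=
  if k = 0 then 2
  else if k + 3 ≤ 3 * r then 4 * ((k + 2) / 3) + 1 - (k + 1)
  else if k + 2 = 3 * r then r + 1
  else r

def deletedWord₂ (r k : ℕ) : ℕ :=
  if k = 0 then 2
  else if k = 3 * r - 2 then r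
  else 4 * ((k + 2) / 3) + 1 - (k + 1)

/-- The `k`-th vertex of the path, as a position in `deletedWord₁ r`. -/
def pathOrder₁ (r k : ℕ) : ℕ :=
  if k = 0 then 0
  else if k = 3 * r - 2 then 3 * r - 1
  else if k = 3 * r - 1 then 3 * r - 2
  else if k % 3 = 1 then k + 2
  else if k % 3 = 2 then k
  else k - 2

def pathOrder₂ (r k : ℕ) : ℕ :=
  if k = 0 then 0
  else if k = 3 * r - 2 then 3 * r - 2
  else if k % 3 = 1 then k + 2
  else if k % 3 = 2 then k
  else k - 2

def pathLetter₁ (r k : ℕ) : ℕ :=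
  if k = 0 then 2
  else if k = 3 * r - 2 then r
  else if k = 3 * r - 1 then r + 1
  else if k % 3 = 1 then k / 3 + 1
  else k / 3 + 2

def pathLetter₂ (r k : ℕ) : ℕ :=
  if k = 0 then 2
  else if k = 3 * r - 2 then r
  else if k % 3 = 1 then k / 3 + 1
  else k / 3 + 2

variable (r : ℕ)

theorem pathWord_delIdx1 (p : Fin (3 * r)) : pathWord r (delIdx1 r p) = deletedWord₁ r p := by
  have hp := p.isLt
  unfold pathWord delIdx1 deletedWord₁
  split_ifs <;> simp_all

theorem pathWord_delIdx2 (p : Fin (3 * r - 1)) :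
    pathWord r (delIdx2 r p) = deletedWord₂ r p := by
  have hp := p.isLt
  unfold pathWord delIdx2 deletedWord₂
  split_ifs <;> simp_all <;> omega

theorem mapsTo_pathOrder₁ : MapsTo (pathOrder₁ r) (Iio (3 * r)) (Iio (3 * r)) := by
  intro k (hk : k < 3 * r)
  show pathOrder₁ r k < 3 * r
  unfold pathOrder₁
  split_ifs <;> omega

theorem mapsTo_pathOrder₂ : MapsTo (pathOrder₂ r) (Iio (3 * r - 1)) (Iio (3 * r - 1)) := by
  intro k (hk : k < 3 * r - 1)
  show pathOrder₂ r k < 3 * r - 1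
  unfold pathOrder₂
  split_ifs <;> omega

theorem injOn_pathOrder₁ : InjOn (pathOrder₁ r) (Iio (3 * r)) := by
  intro i (hi : i < 3 * r) j (hj : j < 3 * r) h
  unfold pathOrder₁ at h
  split_ifs at h <;> omega

theorem injOn_pathOrder₂ : InjOn (pathOrder₂ r) (Iio (3 * r - 1)) := by
  intro i (hi : i < 3 * r - 1) j (hj : j < 3 * r - 1) h
  unfold pathOrder₂ at h
  split_ifs at h <;> omega

variable {r}

theorem deletedWord₁_pathOrder₁ {k : ℕ} (hk : k < 3 * r) :
    deletedWord₁ r (pathOrder₁ r k) = pathLetter₁ r k := by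
  unfold deletedWord₁ pathOrder₁ pathLetter₁
  split_ifs <;> first | contradiction | omega

theorem deletedWord₂_pathOrder₂ {k : ℕ} (hk : k < 3 * r - 1) :
    deletedWord₂ r (pathOrder₂ r k) = pathLetter₂ r k := by
  unfold deletedWord₂ pathOrder₂ pathLetter₂
  split_ifs <;> first | contradiction | omega

theorem pathDecoder_pathLetter₁_iff {i j : ℕ} (hi : i < 3 * r) (hj : j < 3 * r) :
    (pathOrder₁ r i < pathOrder₁ r j ∧ pathDecoder r (pathLetter₁ r i) (pathLetter₁ r j)) ∨
        (pathOrder₁ r j < pathOrder₁ r i ∧ pathDecoder r (pathLetter₁ r j) (pathLetter₁ r i)) ↔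
      i + 1 = j ∨ j + 1 = i := by
  unfold pathOrder₁ pathLetter₁ pathDecoder
  split_ifs <;> omega

theorem pathDecoder_pathLetter₂_iff {i j : ℕ} (hi : i < 3 * r - 1) (hj : j < 3 * r - 1) :
    (pathOrder₂ r i < pathOrder₂ r j ∧ pathDecoder r (pathLetter₂ r i) (pathLetter₂ r j)) ∨
        (pathOrder₂ r j < pathOrder₂ r i ∧ pathDecoder r (pathLetter₂ r j) (pathLetter₂ r i)) ↔
      i + 1 = j ∨ j + 1 = i := by
  unfold pathOrder₂ pathLetter₂ pathDecoder
  split_ifs <;> omega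

end PathWord

open PathWord in
theorem pathWord_deletions_general (r : ℕ) :
    Nonempty (letterGraph (pathDecoder r) (fun p => pathWord r (delIdx1 r p)) ≃g
        SimpleGraph.pathGraph (3 * r)) ∧
      Nonempty (letterGraph (pathDecoder r) (fun p => pathWord r (delIdx2 r p)) ≃g
        SimpleGraph.pathGraph (3 * r - 1)) := by
  constructor
  · refine letterGraph_nonempty_iso_pathGraph _ _ _ (pathWord_delIdx1 r) _
      (mapsTo_pathOrder₁ r) (injOn_pathOrder₁ r) fun i hi j hj => ?_
    rw [deletedWord₁_pathOrder₁ hi, deletedWord₁_pathOrder₁ hj]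
    exact pathDecoder_pathLetter₁_iff hi hj
  · refine letterGraph_nonempty_iso_pathGraph _ _ _ (pathWord_delIdx2 r) _
      (mapsTo_pathOrder₂ r) (injOn_pathOrder₂ r) fun i hi j hj => ?_
    rw [deletedWord₂_pathOrder₂ hi, deletedWord₂_pathOrder₂ hj]
    exact pathDecoder_pathLetter₂_iff hi hj

/-- Deleting the first occurrence of the letter `1` (at position `1`) from the word
`2 1 3 2 1 4 3 2 5 4 3 … (r+1) r (r−1) (r+1) r` yields a word whose letter graph, with
the same decoder `D = {(2,1), …, (r+1,r)}`, is the path `P_{3r}`; additionally deleting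
the last occurrence of the letter `r+1` (at position `3r−1` of the original word) yields
a word whose letter graph is the path `P_{3r−1}`. -/
theorem pathWord_deletions (r : ℕ) (hr : 1 ≤ r) :
    Nonempty (letterGraph (pathDecoder r) (fun p => pathWord r (delIdx1 r p)) ≃g
        SimpleGraph.pathGraph (3 * r)) ∧
      Nonempty (letterGraph (pathDecoder r) (fun p => pathWord r (delIdx2 r p)) ≃g
        SimpleGraph.pathGraph (3 * r - 1)) :=
  pathWord_deletions_general r
end
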